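/- arXiv:2305.10131 — 2 statements merged into one kernel-verified Lean document; each statement's English description precedes it below -/
import Mathlib

section
/- Exact penalty: let K be a nonempty bounded polyhedral set in ℝ^n, f a concave function bounded below on K, and p a nonnegative concave function on K vanishing exactly on a set S ⊆ K containing all vertices of K at which p vanishes; assume the minimum of f over {z ∈ K : p(z) ≤ 0} is attained. If additionally p(z) = 0 on K iff z is a vertex-type (binary) point and K's vertices are contained in {z : p(z)=0}, then there exists t̄ ≥ 0 such that for all t ≥ t̄, the problems min{f(z) : z ∈ K, p(z) ≤ 0} and min{f(z) + t·p(z) : z ∈ K} have the same optimal value and the same solution set. -/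
/-!
The constrained minimum `f z₀` (attained, with `p z₀ = 0`) is a lower bound for the penalized
objective `f + t₀ p` on the polytope `K = conv S` as soon as it is one at the finitely many
points of `S`: `f + t₀ p` is concave, so it attains its minimum over `K` at a point of `S`. At a
point `y ∈ S` with `p y = 0` the bound holds by minimality of `z₀`, and at one with `p y > 0` it
holds once `t₀ ≥ (f z₀ - f y) / p y`. For `t > t₀` a penalized minimizer `z` then satisfies
`f z + t p z ≤ f z₀ ≤ f z + t₀ p z`, which forces `p z = 0`.
-/

open Set

theorem Finset.exists_nonneg_forall_le_add_mul {ι : Type*} (S : Finset ι) (a : ℝ) (f p : ι → ℝ)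
    (hp : ∀ y ∈ S, 0 ≤ p y) (hzero : ∀ y ∈ S, p y = 0 → a ≤ f y) :
    ∃ t, 0 ≤ t ∧ ∀ y ∈ S, a ≤ f y + t * p y := by
  obtain ⟨b, hb⟩ := (S.image fun y => (a - f y) / p y).bddAbove
  refine ⟨max b 0, le_max_right _ _, fun y hy => ?_⟩
  rcases (hp y hy).eq_or_lt with hpy | hpy
  · rw [← hpy, mul_zero, add_zero]
    exact hzero y hy hpy.symm
  · have hquot : (a - f y) / p y ≤ max b 0 :=
      (hb (Finset.mem_image_of_mem _ hy)).trans (le_max_left _ _)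
    rw [div_le_iff₀ hpy] at hquot
    linarith

theorem exists_le_penalized_of_concaveOn_convexHull {E : Type*} [AddCommGroup E] [Module ℝ E]
    {S : Finset E} {f p : E → ℝ} (hf : ConcaveOn ℝ (convexHull ℝ (S : Set E)) f)
    (hp : ConcaveOn ℝ (convexHull ℝ (S : Set E)) p) (hpnn : ∀ y ∈ S, 0 ≤ p y) {a : ℝ}
    (hzero : ∀ y ∈ S, p y = 0 → a ≤ f y) :
    ∃ t₀, 0 ≤ t₀ ∧ ∀ w ∈ convexHull ℝ (S : Set E), a ≤ f w + t₀ * p w := by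
  obtain ⟨t₀, ht₀, hS⟩ := S.exists_nonneg_forall_le_add_mul a f p hpnn hzero
  refine ⟨t₀, ht₀, fun w hw => ?_⟩
  have hpen : ConcaveOn ℝ (convexHull ℝ (S : Set E)) (f + t₀ • p) := hf.add (hp.smul ht₀)
  obtain ⟨y, hy, hyw⟩ := hpen.exists_le_of_mem_convexHull (subset_convexHull ℝ _) hw
  simpa using (hS y hy).trans hyw

section ExactPenalty

variable {α : Type*} {K : Set α} {f p : α → ℝ} {z₀ : α} {t₀ t : ℝ}

theorem le_penalized_mono (hpnn : ∀ z ∈ K, 0 ≤ p z) (h₀ : ∀ w ∈ K, f z₀ ≤ f w + t₀ * p w)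
    (ht : t₀ ≤ t) : ∀ w ∈ K, f z₀ ≤ f w + t * p w := fun w hw =>
  (h₀ w hw).trans (by gcongr; exact hpnn w hw)

theorem sInf_constrained_eq (hz₀ : z₀ ∈ K) (hpz₀ : p z₀ = 0)
    (hmin : ∀ w ∈ K, p w ≤ 0 → f z₀ ≤ f w) :
    sInf {r | ∃ z ∈ K, p z ≤ 0 ∧ r = f z} = f z₀ :=
  IsLeast.csInf_eq ⟨⟨z₀, hz₀, hpz₀.le, rfl⟩, by rintro _ ⟨w, hw, hpw, rfl⟩; exact hmin w hw hpw⟩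

theorem sInf_penalized_eq (hz₀ : z₀ ∈ K) (hpz₀ : p z₀ = 0)
    (hlow : ∀ w ∈ K, f z₀ ≤ f w + t * p w) :
    sInf {r | ∃ z ∈ K, r = f z + t * p z} = f z₀ :=
  IsLeast.csInf_eq ⟨⟨z₀, hz₀, by simp [hpz₀]⟩, by rintro _ ⟨w, hw, rfl⟩; exact hlow w hw⟩

theorem constrained_argmin_eq_penalized_argmin (hpnn : ∀ z ∈ K, 0 ≤ p z) (hz₀ : z₀ ∈ K)
    (hpz₀ : p z₀ = 0) (hmin : ∀ w ∈ K, p w ≤ 0 → f z₀ ≤ f w)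
    (h₀ : ∀ w ∈ K, f z₀ ≤ f w + t₀ * p w) (ht : t₀ < t) :
    {z | z ∈ K ∧ p z ≤ 0 ∧ ∀ w ∈ K, p w ≤ 0 → f z ≤ f w}
      = {z | z ∈ K ∧ ∀ w ∈ K, f z + t * p z ≤ f w + t * p w} := by
  have hlow := le_penalized_mono hpnn h₀ ht.le
  ext z
  constructor
  · rintro ⟨hz, hpz, hzmin⟩
    refine ⟨hz, fun w hw => ?_⟩
    rw [le_antisymm hpz (hpnn z hz), mul_zero, add_zero]
    exact (hzmin z₀ hz₀ hpz₀.le).trans (hlow w hw)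
  · rintro ⟨hz, hzmin⟩
    have hz_le : f z + t * p z ≤ f z₀ := by simpa [hpz₀] using hzmin z₀ hz₀
    have hpz : p z = 0 := by
      have : (t - t₀) * p z ≤ 0 := by linarith [h₀ z hz]
      exact le_antisymm (nonpos_of_mul_nonpos_right this (sub_pos.2 ht)) (hpnn z hz)
    refine ⟨hz, hpz.le, fun w hw hpw => ?_⟩
    rw [hpz, mul_zero, add_zero] at hz_le
    exact hz_le.trans (hmin w hw hpw)

end ExactPenalty

theorem exact_penalty_concave_general
    (n : ℕ) (K : Set (Fin n → ℝ))
    (hKpoly : ∃ S : Finset (Fin n → ℝ), K = convexHull ℝ (S : Set (Fin n → ℝ)))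
    (f p : (Fin n → ℝ) → ℝ)
    (hf : ConcaveOn ℝ K f)
    (hp : ConcaveOn ℝ K p) (hpnn : ∀ z ∈ K, 0 ≤ p z)
    (hattain : ∃ z ∈ K, p z ≤ 0 ∧ ∀ w ∈ K, p w ≤ 0 → f z ≤ f w) :
    ∃ tbar : ℝ, 0 ≤ tbar ∧ ∀ t : ℝ, tbar ≤ t →
      (sInf {r | ∃ z ∈ K, p z ≤ 0 ∧ r = f z}
          = sInf {r | ∃ z ∈ K, r = f z + t * p z}) ∧
      ({z | z ∈ K ∧ p z ≤ 0 ∧ ∀ w ∈ K, p w ≤ 0 → f z ≤ f w}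
          = {z | z ∈ K ∧ ∀ w ∈ K, f z + t * p z ≤ f w + t * p w}) := by
  obtain ⟨S, rfl⟩ := hKpoly
  obtain ⟨z₀, hz₀, hpz₀, hmin⟩ := hattain
  have hpz₀ : p z₀ = 0 := le_antisymm hpz₀ (hpnn z₀ hz₀)
  have hSK : ∀ y ∈ S, y ∈ convexHull ℝ (S : Set (Fin n → ℝ)) := fun y hy =>
    subset_convexHull ℝ _ hy
  obtain ⟨t₀, ht₀, h₀⟩ := exists_le_penalized_of_concaveOn_convexHull hf hp
    (fun y hy => hpnn y (hSK y hy)) fun y hy hpy => hmin y (hSK y hy) hpy.le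
  refine ⟨t₀ + 1, by linarith, fun t ht => ⟨?_, ?_⟩⟩
  · rw [sInf_constrained_eq hz₀ hpz₀ hmin,
      sInf_penalized_eq hz₀ hpz₀ (le_penalized_mono hpnn h₀ (by linarith))]
  · exact constrained_argmin_eq_penalized_argmin hpnn hz₀ hpz₀ hmin h₀ (by linarith)

/-- Exact penalty theorem for concave programming: let K be a nonempty bounded polyhedron
(a polytope), f concave and bounded below on K, p concave and nonnegative on K with the
vertices (extreme points) of K contained in {p = 0}, p vanishing on K exactly at the
vertex-type (binary) points, and assume min{f(z) : z ∈ K, p(z) ≤ 0} is attained. Then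
there is t̄ ≥ 0 such that for every t ≥ t̄ the constrained problem
min{f(z) : z ∈ K, p(z) ≤ 0} and the penalized problem min{f(z) + t·p(z) : z ∈ K}
have the same optimal value and the same solution set. -/
theorem exact_penalty_concave
    (n : ℕ) (K : Set (Fin n → ℝ)) (hKne : K.Nonempty)
    (hKpoly : ∃ S : Finset (Fin n → ℝ), K = convexHull ℝ (S : Set (Fin n → ℝ)))
    (hKbdd : Bornology.IsBounded K)
    (f p : (Fin n → ℝ) → ℝ)
    (hf : ConcaveOn ℝ K f) (hfbdd : BddBelow (f '' K))
    (hp : ConcaveOn ℝ K p) (hpnn : ∀ z ∈ K, 0 ≤ p z)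
    (hvert : Set.extremePoints ℝ K ⊆ {z | p z = 0})
    (hzero : ∀ z ∈ K, (p z = 0 ↔ z ∈ Set.extremePoints ℝ K))
    (hattain : ∃ z ∈ K, p z ≤ 0 ∧ ∀ w ∈ K, p w ≤ 0 → f z ≤ f w) :
    ∃ tbar : ℝ, 0 ≤ tbar ∧ ∀ t : ℝ, tbar ≤ t →
      (sInf {r | ∃ z ∈ K, p z ≤ 0 ∧ r = f z}
          = sInf {r | ∃ z ∈ K, r = f z + t * p z}) ∧
      ({z | z ∈ K ∧ p z ≤ 0 ∧ ∀ w ∈ K, p w ≤ 0 → f z ≤ f w}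
          = {z | z ∈ K ∧ ∀ w ∈ K, f z + t * p z ≤ f w + t * p w}) :=
  exact_penalty_concave_general n K hKpoly f p hf hp hpnn hattain
end

section
/- If in the DCA scheme f(x^{k+1}) = f(x^k) (with y^k ∈ ∂h(x^k) and x^{k+1} ∈ argmin{g(x) − ⟨x,y^k⟩}), then x^k is a critical point of g − h, i.e., ∂g(x^k) ∩ ∂h(x^k) ≠ ∅. -/
/-!
The stall forces `x^k` to attain the minimum of `g - ⟪·, y^k⟫` as well: the subgradient
inequality for `h` at `x^k`, evaluated at `x^{k+1}`, bounds `g x^k - ⟪x^k, y^k⟫` by the optimal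
value `g x^{k+1} - ⟪x^{k+1}, y^k⟫`. A point minimizing `g - ⟪·, y⟫` has `y` as a subgradient of
`g`, so `y^k ∈ ∂g(x^k) ∩ ∂h(x^k)`.
-/

open RealInnerProductSpace

section

variable {E : Type*} [NormedAddCommGroup E] [InnerProductSpace ℝ E]

theorem le_add_inner_of_forall_sub_inner_le {g : E → ℝ} {x y : E}
    (hx : ∀ z, g x - ⟪x, y⟫ ≤ g z - ⟪z, y⟫) (z : E) : g z ≥ g x + ⟪z - x, y⟫ := by
  have := hx z
  rw [inner_sub_left]
  linarith

theorem forall_sub_inner_le_of_stall {g h : E → ℝ} {x y x' : E}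
    (hy : ∀ z, h z ≥ h x + ⟪z - x, y⟫) (hx' : ∀ z, g x' - ⟪x', y⟫ ≤ g z - ⟪z, y⟫)
    (hstall : g x' - h x' = g x - h x) (z : E) : g x - ⟪x, y⟫ ≤ g z - ⟪z, y⟫ := by
  have hyx' := hy x'
  have hx'z := hx' z
  rw [inner_sub_left] at hyx'
  linarith

end

theorem dca_stall_implies_critical_general
    {E : Type*} [NormedAddCommGroup E] [InnerProductSpace ℝ E]
    (g h : E → ℝ)
    (xk yk xk1 : E)
    (hyk : ∀ z, h z ≥ h xk + ⟪z - xk, yk⟫)  -- y^k ∈ ∂h(x^k)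
    (hmin : ∀ z, g xk1 - ⟪xk1, yk⟫ ≤ g z - ⟪z, yk⟫)
    (hstall : g xk1 - h xk1 = g xk - h xk) :
    ∃ w : E, (∀ z, g z ≥ g xk + ⟪z - xk, w⟫) ∧ (∀ z, h z ≥ h xk + ⟪z - xk, w⟫) :=
  ⟨yk, le_add_inner_of_forall_sub_inner_le (forall_sub_inner_le_of_stall hyk hmin hstall), hyk⟩

/-- If in the DCA scheme the objective value stalls, f(x^{k+1}) = f(x^k), then x^k is a
critical point of g − h: ∂g(x^k) ∩ ∂h(x^k) ≠ ∅. -/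
theorem dca_stall_implies_critical
    {E : Type*} [NormedAddCommGroup E] [InnerProductSpace ℝ E]
    (g h : E → ℝ)
    (hg : ConvexOn ℝ Set.univ g) (hh : ConvexOn ℝ Set.univ h)
    (hglsc : LowerSemicontinuous g) (hhlsc : LowerSemicontinuous h)
    (xk yk xk1 : E)
    (hyk : ∀ z, h z ≥ h xk + ⟪z - xk, yk⟫)  -- y^k ∈ ∂h(x^k)
    (hmin : ∀ z, g xk1 - ⟪xk1, yk⟫ ≤ g z - ⟪z, yk⟫)
    (hstall : g xk1 - h xk1 = g xk - h xk) :
    ∃ w : E, (∀ z, g z ≥ g xk + ⟪z - xk, w⟫) ∧ (∀ z, h z ≥ h xk + ⟪z - xk, w⟫) :=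
  dca_stall_implies_critical_general g h xk yk xk1 hyk hmin hstall
end
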